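/- Let h be a positive integer. There exists a positive integer k = k(h) such that if D is a finite digraph having a representation of the complete graph K_k, then D has a 5-eulerianizable subdigraph with a haven of order at least h + 1. -/

import Mathlib

/-- A directed path in the digraph with adjacency relation `A`: a nonempty list of
distinct vertices in which each consecutive pair is joined by an edge directed forwards. -/
def IsDipath {V : Type*} (A : V → V → Prop) (l : List V) : Prop :=
  l ≠ [] ∧ l.Nodup ∧ l.Chain' A

/-- A directed path all of whose vertices lie in the set `S`. -/
def DipathIn {V : Type*} (A : V → V → Prop) (S : Set V) (l : List V) : Prop :=
  IsDipath A l ∧ ∀ v ∈ l, v ∈ S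

/-- A directed path from `u` to `v`. -/
def DipathFromTo {V : Type*} (A : V → V → Prop) (l : List V) (u v : V) : Prop :=
  IsDipath A l ∧ l.head? = some u ∧ l.getLast? = some v

/-- The digraph with adjacency `A` is strongly connected on the vertex set `S`:
any vertex of `S` can reach any other by a directed path staying inside `S`. -/
def StrongOn {V : Type*} (A : V → V → Prop) (S : Set V) : Prop :=
  ∀ u ∈ S, ∀ v ∈ S, ∃ l : List V, DipathIn A S l ∧ l.head? = some u ∧ l.getLast? = some v

/-- `C` is (the vertex set of) a strong component of the subdigraph induced on `W`:
a maximal nonempty strongly connected subset of `W`. -/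
def IsStrongComponent {V : Type*} (A : V → V → Prop) (W C : Set V) : Prop :=
  C ⊆ W ∧ C.Nonempty ∧ StrongOn A C ∧
    ∀ C' : Set V, C ⊆ C' → C' ⊆ W → StrongOn A C' → C' = C

/-- `B` is a haven of order `w` in the digraph with adjacency `A` and vertex set `S`:
for every `Z ⊆ S` with `|Z| < w`, `B Z` is a strong component of the digraph minus `Z`,
and `B Z ⊆ B Z'` whenever `Z' ⊆ Z` (the haven axiom). -/
def IsHavenOn {V : Type*} (A : V → V → Prop) (S : Set V) (w : ℕ) (B : Finset V → Set V) : Prop :=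
  ∀ Z : Finset V, ↑Z ⊆ S → Z.card < w →
    IsStrongComponent A (S \ ↑Z) (B Z) ∧ ∀ Z' : Finset V, Z' ⊆ Z → B Z ⊆ B Z'

/-- The digraph with adjacency `A` and vertex set `S` has a haven of order `w`. -/
def HasHavenOn {V : Type*} (A : V → V → Prop) (S : Set V) (w : ℕ) : Prop :=
  ∃ B : Finset V → Set V, IsHavenOn A S w B

/-- The digraph with adjacency `A` (on its whole vertex type) has a haven of order `w`. -/
def HasHaven {V : Type*} (A : V → V → Prop) (w : ℕ) : Prop :=
  HasHavenOn A Set.univ w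

/-- A linkage from the finite set `S` to the finite set `T`: for each `a ∈ S`,
`P a` is a directed path from `a` to `τ a ∈ T`, and the paths are pairwise vertex-disjoint
(so the ends `τ a` are distinct vertices of `T`). -/
def IsLinkage {V : Type*} (A : V → V → Prop) (S T : Finset V)
    (P : V → List V) (τ : V → V) : Prop :=
  (∀ a ∈ S, τ a ∈ T ∧ DipathFromTo A (P a) a (τ a)) ∧
  ∀ a₁ ∈ S, ∀ a₂ ∈ S, a₁ ≠ a₂ → ∀ v ∈ P a₁, v ∉ P a₂

/-- `X` is linked: for every `S, T ⊆ X` with `|S| = |T|` there is a linkage of `|S|`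
pairwise vertex-disjoint directed paths from `S` to `T`. -/
def Linked {V : Type*} (A : V → V → Prop) (X : Finset V) : Prop :=
  ∀ S T : Finset V, S ⊆ X → T ⊆ X → S.card = T.card →
    ∃ (P : V → List V) (τ : V → V), IsLinkage A S T P τ

/-- `(S, A')` is a subdigraph of the digraph with adjacency `A`: every edge of `A'`
is an edge of `A` with both ends in `S`. -/
def IsSubdigraph {V : Type*} (A : V → V → Prop) (S : Set V) (A' : V → V → Prop) : Prop :=
  ∀ u v, A' u v → A u v ∧ u ∈ S ∧ v ∈ S

/-- The digraph with adjacency `A` and vertex set `S` is `k`-eulerianizable: it is strongly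
connected and one can assign a positive multiplicity to each edge so that at every vertex the
total multiplicity of in-edges equals that of the out-edges and both are at most `k`. -/
def Eulerianizable {V : Type*} [Fintype V] (A : V → V → Prop) (S : Set V) (k : ℕ) : Prop :=
  StrongOn A S ∧ ∃ m : V → V → ℕ,
    (∀ u v, A u v → 1 ≤ m u v) ∧ (∀ u v, ¬ A u v → m u v = 0) ∧
    ∀ v ∈ S, (∑ u, m u v) = (∑ u, m v u) ∧ (∑ u, m v u) ≤ k

/-- A representation of the graph `G` in the digraph on `V` with adjacency `A`:
collections of pairwise vertex-disjoint strongly connected subdigraphs indexed by the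
vertices of `G`, and of pairwise vertex-disjoint `2`-eulerianizable subdigraphs indexed
by the edges of `G`, such that the subdigraph of each edge shares a vertex with the
subdigraph of each of its two ends. -/
structure DigraphRep (V : Type*) [Fintype V] (A : V → V → Prop)
    {W : Type*} (G : SimpleGraph W) where
  vS : W → Set V
  vA : W → V → V → Prop
  eS : Sym2 W → Set V
  eA : Sym2 W → V → V → Prop
  vSub : ∀ w, IsSubdigraph A (vS w) (vA w)
  vNonempty : ∀ w, (vS w).Nonempty
  vStrong : ∀ w, StrongOn (vA w) (vS w)
  vDisj : ∀ w w', w ≠ w' → Disjoint (vS w) (vS w')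
  eSub : ∀ e ∈ G.edgeSet, IsSubdigraph A (eS e) (eA e)
  eNonempty : ∀ e ∈ G.edgeSet, (eS e).Nonempty
  eEul : ∀ e ∈ G.edgeSet, Eulerianizable (eA e) (eS e) 2
  eDisj : ∀ e ∈ G.edgeSet, ∀ e' ∈ G.edgeSet, e ≠ e' → Disjoint (eS e) (eS e')
  meets : ∀ e ∈ G.edgeSet, ∀ w ∈ e, (eS e ∩ vS w).Nonempty

/-- The representation is faithful: the subdigraph of each edge is vertex-disjoint from
the subdigraph of every vertex of `G` that is not an end of that edge. -/
def DigraphRep.Faithful {V W : Type*} [Fintype V] {A : V → V → Prop}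
    {G : SimpleGraph W} (R : DigraphRep V A G) : Prop :=
  ∀ e ∈ G.edgeSet, ∀ w, w ∉ e → Disjoint (R.eS e) (R.vS w)

/-!
Take `k` to be the number of vertices of a cubic toroidal grid: `2h + 2` disjoint row cycles and
`2h + 2` disjoint column cycles on `ZMod (2h + 2) × ZMod (2h + 2)`, the `j`-th vertex of row `i`
being joined by a rung to the `i`-th vertex of column `j`. A representation of `K_k` restricts to
a representation of this grid. Inside the branch set of each grid vertex, join the three points
where it meets its incident edge sets by three dipaths in cyclic order. A vertex of `D` lies on at
most three of these dipaths and in at most one edge subdigraph, so adding the path multiplicities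
to the eulerian weightings of the (`2`-eulerianizable) edge subdigraphs gives an eulerian weighting
of load at most `3 + 2 = 5` on the union of all these pieces.

A vertex of `D` lies in at most one branch set and one edge set, hence on at most two rows, so a
set `Z` of at most `h` vertices misses a row, and likewise a column. Every row meets every column,
so the rows and columns missing `Z` are strongly connected together, and the strong components of
the realization minus `Z` containing them form a haven of order `h + 1`.
-/

open Relation Set

section

variable {V : Type*} {A A' : V → V → Prop} {S T W W' : Set V} {u v x x' y : V}

def ReachIn (A : V → V → Prop) (S : Set V) : V → V → Prop :=
  ReflTransGen fun a b => A a b ∧ a ∈ S ∧ b ∈ S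

theorem ReachIn.refl : ReachIn A S u u := ReflTransGen.refl

theorem ReachIn.trans (h₁ : ReachIn A S u v) (h₂ : ReachIn A S v x) : ReachIn A S u x :=
  ReflTransGen.trans h₁ h₂

theorem ReachIn.mem (h : ReachIn A S u v) (hu : u ∈ S) : v ∈ S := by
  induction h with
  | refl => exact hu
  | tail _ hbc _ => exact hbc.2.2

theorem ReachIn.mono (hA : ∀ a b, A a b → A' a b) (hS : S ⊆ T) (h : ReachIn A S u v) :
    ReachIn A' T u v :=
  ReflTransGen.mono (fun _ _ ⟨hab, ha, hb⟩ => ⟨hA _ _ hab, hS ha, hS hb⟩) _ _ h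

theorem ReachIn.mono_set (hS : S ⊆ T) (h : ReachIn A S u v) : ReachIn A T u v :=
  h.mono (fun _ _ => id) hS

theorem DipathIn.reachIn_of_mem {l : List V} (hl : DipathIn A S l) (hu : l.head? = some u)
    (hv : l.getLast? = some v) (hy : y ∈ l) : ReachIn A S u y ∧ ReachIn A S y v := by
  obtain ⟨⟨hne, -, hch⟩, hlS⟩ := hl
  have hch' : l.IsChain fun a b => A a b ∧ a ∈ S ∧ b ∈ S :=
    hch.imp_of_mem_imp fun a b ha hb hab => ⟨hab, hlS a ha, hlS b hb⟩
  rw [List.head?_eq_some_head hne, Option.some_inj] at hu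
  rw [List.getLast?_eq_some_getLast hne, Option.some_inj] at hv
  exact ⟨hch'.induction (ReachIn A S u) _ (fun _ _ hab h => h.tail hab) (fun _ => hu ▸ .refl) y hy,
    hch'.backwards_induction (ReachIn A S · v) _ (fun _ _ hab h => h.head hab)
      (fun _ => hv ▸ .refl) y hy⟩

theorem exists_dipathIn_of_reachIn (hu : u ∈ S) (h : ReachIn A S u v) :
    ∃ l, DipathIn A S l ∧ l.head? = some u ∧ l.getLast? = some v := by
  induction h using ReflTransGen.head_induction_on with
  | refl =>
    exact ⟨[v], ⟨⟨List.cons_ne_nil _ _, List.nodup_singleton v, .singleton v⟩, by simpa⟩, rfl, rfl⟩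
  | @head a c hac _ ih =>
    obtain ⟨l, ⟨⟨hne, hnd, hch⟩, hlS⟩, hlu, hlv⟩ := ih hac.2.2
    by_cases ha : a ∈ l
    -- the walk returns to `a`: cut the path at `a`
    · obtain ⟨s, t, rfl⟩ := List.append_of_mem ha
      refine ⟨a :: t, ⟨⟨List.cons_ne_nil _ _, hnd.sublist (List.sublist_append_right _ _),
        hch.infix ⟨s, [], by simp⟩⟩, fun x hx => hlS x (by simp_all)⟩, rfl, ?_⟩
      rwa [← List.getLast?_append_of_ne_nil s (List.cons_ne_nil _ _)]
    · refine ⟨a :: l, ⟨⟨List.cons_ne_nil _ _, List.nodup_cons.2 ⟨ha, hnd⟩, ?_⟩, ?_⟩, rfl, ?_⟩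
      · obtain ⟨t, rfl⟩ : ∃ t, l = c :: t := ⟨l.tail, by
          cases l with | nil => simp at hlu | cons _ _ => simp_all⟩
        exact List.IsChain.cons_cons hac.1 hch
      · simpa [hac.2.1] using hlS
      · cases l with | nil => simp at hlu | cons _ _ => simpa using hlv

theorem strongOn_iff_reachIn : StrongOn A S ↔ ∀ u ∈ S, ∀ v ∈ S, ReachIn A S u v := by
  refine ⟨fun h u hu v hv => ?_, fun h u hu v hv => exists_dipathIn_of_reachIn hu (h u hu v hv)⟩
  obtain ⟨l, hl, hlu, hlv⟩ := h u hu v hv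
  exact (hl.reachIn_of_mem hlu hlv (List.mem_of_mem_getLast? hlv)).1

theorem StrongOn.reachIn (h : StrongOn A T) (hTS : T ⊆ S) (hu : u ∈ T) (hv : v ∈ T) :
    ReachIn A S u v :=
  (strongOn_iff_reachIn.1 h u hu v hv).mono_set hTS

theorem StrongOn.mono_adj (hA : ∀ a b, A a b → A' a b) (h : StrongOn A S) : StrongOn A' S :=
  strongOn_iff_reachIn.2 fun _ hu _ hv => (h.reachIn subset_rfl hu hv).mono hA subset_rfl

theorem strongOn_of_reachIn_hub (b : V) (hb : ∀ u ∈ S, ReachIn A S u b ∧ ReachIn A S b u) :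
    StrongOn A S :=
  strongOn_iff_reachIn.2 fun u hu v hv => (hb u hu).1.trans (hb v hv).2

theorem StrongOn.union (hS : StrongOn A S) (hT : StrongOn A T) (hST : (S ∩ T).Nonempty) :
    StrongOn A (S ∪ T) := by
  obtain ⟨b, hbS, hbT⟩ := hST
  refine strongOn_of_reachIn_hub b fun u hu => ?_
  rcases hu with hu | hu
  · exact ⟨hS.reachIn subset_union_left hu hbS, hS.reachIn subset_union_left hbS hu⟩
  · exact ⟨hT.reachIn subset_union_right hu hbT, hT.reachIn subset_union_right hbT hu⟩

theorem strongOn_iUnion_of_chain (B : ℕ → Set V) (hB : ∀ k, StrongOn A (B k))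
    (hmeet : ∀ k, (B k ∩ B (k + 1)).Nonempty) : StrongOn A (⋃ k, B k) := by
  obtain ⟨b, hb, -⟩ := hmeet 0
  suffices hk : ∀ k, ∀ u ∈ B k, ReachIn A (⋃ k, B k) u b ∧ ReachIn A (⋃ k, B k) b u from
    strongOn_of_reachIn_hub b fun u hu => (mem_iUnion.1 hu).elim fun k => hk k u
  intro k u hu
  induction k generalizing u with
  | zero => exact ⟨(hB 0).reachIn (subset_iUnion B 0) hu hb,
      (hB 0).reachIn (subset_iUnion B 0) hb hu⟩
  | succ k ih =>
    obtain ⟨c, hck, hck'⟩ := hmeet k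
    have hsub := subset_iUnion B (k + 1)
    exact ⟨((hB _).reachIn hsub hu hck').trans (ih c hck).1,
      (ih c hck).2.trans ((hB _).reachIn hsub hck' hu)⟩

theorem strongOn_iUnion_of_cycle {n : ℕ} [NeZero n] (B : ZMod n → Set V)
    (hB : ∀ j, StrongOn A (B j)) (hmeet : ∀ j, (B j ∩ B (j + 1)).Nonempty) :
    StrongOn A (⋃ j, B j) := by
  rw [← ZMod.natCast_zmod_surjective.iUnion_comp B]
  exact strongOn_iUnion_of_chain _ (fun k => hB k) fun k => by simpa using hmeet k

theorem strongOn_union_iUnion_of_meets {ι κ : Type*} [Nonempty ι] [Nonempty κ]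
    (B : ι → Set V) (C : κ → Set V) (hB : ∀ i, StrongOn A (B i)) (hC : ∀ j, StrongOn A (C j))
    (hmeet : ∀ i j, (B i ∩ C j).Nonempty) : StrongOn A ((⋃ i, B i) ∪ ⋃ j, C j) := by
  obtain ⟨i₀⟩ := ‹Nonempty ι›
  obtain ⟨j₀⟩ := ‹Nonempty κ›
  have hBsub i : B i ⊆ (⋃ i, B i) ∪ ⋃ j, C j := (subset_iUnion B i).trans subset_union_left
  have hCsub j : C j ⊆ (⋃ i, B i) ∪ ⋃ j, C j := (subset_iUnion C j).trans subset_union_right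
  obtain ⟨b, hbB, hbC⟩ := hmeet i₀ j₀
  refine strongOn_of_reachIn_hub b fun u hu => ?_
  rcases hu with hu | hu
  · obtain ⟨i, hu⟩ := mem_iUnion.1 hu
    obtain ⟨c, hcB, hcC⟩ := hmeet i j₀
    exact ⟨((hB i).reachIn (hBsub i) hu hcB).trans ((hC j₀).reachIn (hCsub j₀) hcC hbC),
      ((hC j₀).reachIn (hCsub j₀) hbC hcC).trans ((hB i).reachIn (hBsub i) hcB hu)⟩
  · obtain ⟨j, hu⟩ := mem_iUnion.1 hu
    obtain ⟨c, hcB, hcC⟩ := hmeet i₀ j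
    exact ⟨((hC j).reachIn (hCsub j) hu hcC).trans ((hB i₀).reachIn (hBsub i₀) hcB hbB),
      ((hB i₀).reachIn (hBsub i₀) hbB hcB).trans ((hC j).reachIn (hCsub j) hcC hu)⟩

theorem ReachIn.restrict {C : Set V} (h : ReachIn A W u v)
    (hC : ∀ y, ReachIn A W u y → ReachIn A W y v → y ∈ C) : ReachIn A C u v := by
  induction h using ReflTransGen.head_induction_on with
  | refl => exact .refl
  | @head a c hac hcv ih =>
    have hc : c ∈ C := hC c (.single hac) hcv
    exact .head ⟨hac.1, hC a .refl (.head hac hcv), hc⟩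
      (ih fun y hcy hyv => hC y (.head hac hcy) hyv)

def strongComponentAt (A : V → V → Prop) (W : Set V) (x : V) : Set V :=
  {v | v ∈ W ∧ ReachIn A W x v ∧ ReachIn A W v x}

theorem isStrongComponent_strongComponentAt (hx : x ∈ W) :
    IsStrongComponent A W (strongComponentAt A W x) := by
  refine ⟨fun v hv => hv.1, ⟨x, hx, .refl, .refl⟩, ?_, fun C hsub hCW hC => ?_⟩
  · refine strongOn_iff_reachIn.2 fun a ha b hb => ?_
    exact (ha.2.2.trans hb.2.1).restrict fun y hay hyb =>
      ⟨hay.mem ha.1, ha.2.1.trans hay, hyb.trans hb.2.2⟩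
  · refine Subset.antisymm (fun v hv => ?_) hsub
    have hxC : x ∈ C := hsub ⟨hx, .refl, .refl⟩
    exact ⟨hCW hv, hC.reachIn hCW hxC hv, hC.reachIn hCW hv hxC⟩

theorem strongComponentAt_subset (hW : W ⊆ W') (h₁ : ReachIn A W' x' x)
    (h₂ : ReachIn A W' x x') : strongComponentAt A W x ⊆ strongComponentAt A W' x' :=
  fun _ hv => ⟨hW hv.1, h₁.trans (hv.2.1.mono_set hW), (hv.2.2.mono_set hW).trans h₂⟩

theorem hasHavenOn_of_antitone (w : ℕ) (U : Finset V → Set V)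
    (hsub : ∀ Z : Finset V, Z.card < w → U Z ⊆ S \ Z)
    (hne : ∀ Z : Finset V, Z.card < w → (U Z).Nonempty)
    (hstrong : ∀ Z : Finset V, Z.card < w → StrongOn A (U Z))
    (hanti : ∀ Z Z' : Finset V, Z' ⊆ Z → Z.card < w → U Z ⊆ U Z') : HasHavenOn A S w := by
  classical
  refine ⟨fun Z => if h : (U Z).Nonempty then strongComponentAt A (S \ Z) h.some else ∅,
    fun Z _ hZ => ?_⟩
  have hmem Z (hZ : Z.card < w) : (hne Z hZ).some ∈ U Z := (hne Z hZ).some_mem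
  refine ⟨?_, fun Z' hZ'Z => ?_⟩
  · dsimp only
    rw [dif_pos (hne Z hZ)]
    exact isStrongComponent_strongComponentAt (hsub Z hZ (hmem Z hZ))
  · have hZ' : Z'.card < w := (Finset.card_le_card hZ'Z).trans_lt hZ
    dsimp only
    rw [dif_pos (hne Z hZ), dif_pos (hne Z' hZ')]
    have hx : (hne Z hZ).some ∈ U Z' := hanti Z Z' hZ'Z hZ (hmem Z hZ)
    exact strongComponentAt_subset (sdiff_subset_sdiff_right (Finset.coe_subset.2 hZ'Z))
      ((hstrong Z' hZ').reachIn (hsub Z' hZ') (hmem Z' hZ') hx)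
      ((hstrong Z' hZ').reachIn (hsub Z' hZ') hx (hmem Z' hZ'))

end

theorem exists_disjoint_of_two_mul_card_lt {V ι : Type*} [Fintype ι] (L : ι → Set V)
    (Z : Finset V) (hL : ∀ v, ∃ a b, ∀ i, v ∈ L i → i = a ∨ i = b)
    (hZ : 2 * Z.card < Fintype.card ι) : ∃ i, Disjoint (L i) Z := by
  classical
  by_contra! hmeet
  choose f hfL hfZ using fun i => not_disjoint_iff.1 (hmeet i)
  refine hZ.not_ge (Finset.card_le_mul_card_image_of_maps_to (fun i _ => hfZ i) 2 fun z _ => ?_)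
  obtain ⟨a, b, hab⟩ := hL z
  calc (Finset.univ.filter fun i => f i = z).card ≤ ({a, b} : Finset ι).card :=
        Finset.card_le_card fun i hi => by
          obtain rfl | rfl := hab i ((Finset.mem_filter.1 hi).2 ▸ hfL i) <;> simp
    _ ≤ 2 := Finset.card_le_two

section
variable {V : Type*}

theorem List.map_fst_consecutivePairs : ∀ l : List V, l.consecutivePairs.map Prod.fst = l.dropLast
  | [] | [_] => rfl
  | a :: b :: l => by
    simpa [List.consecutivePairs] using List.map_fst_consecutivePairs (b :: l)

theorem List.map_snd_consecutivePairs (l : List V) : l.consecutivePairs.map Prod.snd = l.tail :=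
  List.map_snd_zip (by simp)

theorem List.mem_of_mem_consecutivePairs {l : List V} {a b : V}
    (h : (a, b) ∈ l.consecutivePairs) : a ∈ l ∧ b ∈ l :=
  ⟨l.dropLast_subset (l.map_fst_consecutivePairs ▸ List.mem_map_of_mem (f := Prod.fst) h),
    l.tail_subset (l.map_snd_consecutivePairs ▸ List.mem_map_of_mem (f := Prod.snd) h)⟩

theorem List.isChain_iff_forall_mem_consecutivePairs {r : V → V → Prop} :
    ∀ {l : List V}, l.IsChain r ↔ ∀ a b, (a, b) ∈ l.consecutivePairs → r a b
  | [] | [_] => by simp [List.consecutivePairs]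
  | a :: b :: l => by
    rw [List.isChain_cons_cons, List.isChain_iff_forall_mem_consecutivePairs]
    simp [List.consecutivePairs, or_imp, forall_and]

variable [DecidableEq V]

theorem List.sum_count_pair_left [Fintype V] (P : List (V × V)) (v : V) :
    ∑ u, P.count (v, u) = (P.map Prod.fst).count v := by
  induction P with
  | nil => simp
  | cons a P ih =>
    simp only [List.count_cons, List.map_cons, Finset.sum_add_distrib, ih, beq_iff_eq,
      Prod.ext_iff]
    by_cases h : a.1 = v <;> simp [h]

theorem List.sum_count_pair_right [Fintype V] (P : List (V × V)) (v : V) :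
    ∑ u, P.count (u, v) = (P.map Prod.snd).count v := by
  induction P with
  | nil => simp
  | cons a P ih =>
    simp only [List.count_cons, List.map_cons, Finset.sum_add_distrib, ih, beq_iff_eq,
      Prod.ext_iff]
    by_cases h : a.2 = v <;> simp [h]

theorem List.count_eq_count_tail_add (l : List V) (v : V) :
    l.count v = l.tail.count v + if l.head? = some v then 1 else 0 := by
  cases l <;> simp [List.count_cons]

theorem List.count_eq_count_dropLast_add (l : List V) (v : V) :
    l.count v = l.dropLast.count v + if l.getLast? = some v then 1 else 0 := by
  rcases l.eq_nil_or_concat with rfl | ⟨L, b, rfl⟩ <;> simp [List.count_cons]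

theorem sum_count_tail_eq_sum_count_dropLast {ι : Type*} [Fintype ι] (P : ι → List V)
    (σ : Equiv.Perm ι) (hP : ∀ d, (P d).getLast? = (P (σ d)).head?) (v : V) :
    ∑ d, (P d).tail.count v = ∑ d, (P d).dropLast.count v := by
  have hcount := Finset.sum_congr rfl fun d (_ : d ∈ Finset.univ) =>
    ((P d).count_eq_count_tail_add v).symm.trans ((P d).count_eq_count_dropLast_add v)
  rw [Finset.sum_add_distrib, Finset.sum_add_distrib] at hcount
  simp only [hP] at hcount
  rwa [Equiv.sum_comp σ (fun d => if (P d).head? = some v then 1 else 0), add_left_inj] at hcount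

end

theorem Finset.sum_le_of_ne_zero_imp_eq {ι : Type*} [Fintype ι] {f : ι → ℕ} {c : ℕ}
    (hf : ∀ i j, f i ≠ 0 → f j ≠ 0 → i = j) (hc : ∀ i, f i ≤ c) : ∑ i, f i ≤ c := by
  by_cases h : ∃ i, f i ≠ 0
  · obtain ⟨i, hi⟩ := h
    rw [Finset.sum_eq_single i (fun j _ hji => by_contra fun hj => hji (hf j i hj hi)) (by simp)]
    exact hc i
  · push Not at h
    simp [h]

namespace DigraphRep

variable {V W W' : Type*} [Fintype V] {A : V → V → Prop} {G : SimpleGraph W}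
  {G' : SimpleGraph W'}

def comap (R : DigraphRep V A G) (f : G'.Copy G) : DigraphRep V A G' where
  vS := R.vS ∘ f
  vA := R.vA ∘ f
  eS e := R.eS (e.map f)
  eA e := R.eA (e.map f)
  vSub w := R.vSub (f w)
  vNonempty w := R.vNonempty (f w)
  vStrong w := R.vStrong (f w)
  vDisj _ _ hww' := R.vDisj _ _ (f.injective.ne hww')
  eSub _ he := R.eSub _ (f.toHom.map_mem_edgeSet he)
  eNonempty _ he := R.eNonempty _ (f.toHom.map_mem_edgeSet he)
  eEul _ he := R.eEul _ (f.toHom.map_mem_edgeSet he)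
  eDisj _ he _ he' hee' := R.eDisj _ (f.toHom.map_mem_edgeSet he) _
    (f.toHom.map_mem_edgeSet he') ((Sym2.map.injective f.injective).ne hee')
  meets _ he w hw := R.meets _ (f.toHom.map_mem_edgeSet he) _ (Sym2.mem_map.2 ⟨w, hw, rfl⟩)

variable (R : DigraphRep V A G)

theorem eq_of_mem_vS {v : V} {w w' : W} (hw : v ∈ R.vS w) (hw' : v ∈ R.vS w') : w = w' :=
  by_contra fun hne => Set.disjoint_left.1 (R.vDisj w w' hne) hw hw'

theorem eq_of_mem_eS {v : V} {e e' : Sym2 W} (he : e ∈ G.edgeSet) (he' : e' ∈ G.edgeSet)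
    (hv : v ∈ R.eS e) (hv' : v ∈ R.eS e') : e = e' :=
  by_contra fun hne => Set.disjoint_left.1 (R.eDisj e he e' he' hne) hv hv'

theorem exists_two_of_mem {ι : Type*} [Nonempty ι] (f : W → ι) (L : ι → Set V)
    (hL : ∀ i, ∀ v ∈ L i, (∃ w, f w = i ∧ v ∈ R.vS w) ∨
      ∃ e ∈ G.edgeSet, (∀ w ∈ e, f w = i) ∧ v ∈ R.eS e) (v : V) :
    ∃ a b, ∀ i, v ∈ L i → i = a ∨ i = b := by
  classical
  refine ⟨if hw : ∃ w, v ∈ R.vS w then f hw.choose else Classical.arbitrary ι,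
    if he : ∃ e ∈ G.edgeSet, v ∈ R.eS e then f he.choose.out.1 else Classical.arbitrary ι,
    fun i hi => ?_⟩
  rcases hL i v hi with ⟨w, rfl, hw⟩ | ⟨e, he, hfe, hv⟩
  · have hex : ∃ w, v ∈ R.vS w := ⟨w, hw⟩
    left
    rw [dif_pos hex, R.eq_of_mem_vS hw hex.choose_spec]
  · have hex : ∃ e ∈ G.edgeSet, v ∈ R.eS e := ⟨e, he, hv⟩
    right
    rw [dif_pos hex, ← R.eq_of_mem_eS he hex.choose_spec.1 hv hex.choose_spec.2,
      hfe _ e.out_fst_mem]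

end DigraphRep

-- Three (not necessarily distinct) edges at each vertex; the branch set of `w` is routed through
-- them in the cyclic order of `Fin 3`.
structure SimpleGraph.PortTriple {W : Type*} (G : SimpleGraph W) where
  port : W → Fin 3 → Sym2 W
  port_mem_edgeSet : ∀ w d, port w d ∈ G.edgeSet
  mem_port : ∀ w d, w ∈ port w d

namespace DigraphRep

variable {V W : Type*} [Fintype V] {A : V → V → Prop} {G : SimpleGraph W} (R : DigraphRep V A G)
  (P : G.PortTriple)

noncomputable def terminal (w : W) (d : Fin 3) : V :=
  (R.meets _ (P.port_mem_edgeSet w d) w (P.mem_port w d)).some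

theorem terminal_mem (w : W) (d : Fin 3) : R.terminal P w d ∈ R.eS (P.port w d) ∩ R.vS w :=
  Set.Nonempty.some_mem _

noncomputable def branchPath (w : W) (d : Fin 3) : List V :=
  (R.vStrong w _ (R.terminal_mem P w d).2 _ (R.terminal_mem P w (d + 1)).2).choose

theorem branchPath_spec (w : W) (d : Fin 3) :
    DipathIn (R.vA w) (R.vS w) (R.branchPath P w d) ∧
      (R.branchPath P w d).head? = some (R.terminal P w d) ∧
      (R.branchPath P w d).getLast? = some (R.terminal P w (d + 1)) :=
  (R.vStrong w _ (R.terminal_mem P w d).2 _ (R.terminal_mem P w (d + 1)).2).choose_spec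

def branchSet (w : W) : Set V := {v | ∃ d, v ∈ R.branchPath P w d}

theorem branchSet_subset_vS (w : W) : R.branchSet P w ⊆ R.vS w :=
  fun _ ⟨d, hv⟩ => (R.branchPath_spec P w d).1.2 _ hv

theorem terminal_mem_branchSet (w : W) (d : Fin 3) : R.terminal P w d ∈ R.branchSet P w :=
  ⟨d, List.mem_of_mem_head? (R.branchPath_spec P w d).2.1⟩

open Classical in
noncomputable def edgeMult (e : Sym2 W) : V → V → ℕ :=
  if he : e ∈ G.edgeSet then (R.eEul e he).2.choose else 0

theorem edgeMult_spec {e : Sym2 W} (he : e ∈ G.edgeSet) :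
    (∀ u v, R.eA e u v → 1 ≤ R.edgeMult e u v) ∧ (∀ u v, ¬ R.eA e u v → R.edgeMult e u v = 0) ∧
      ∀ v ∈ R.eS e, (∑ u, R.edgeMult e u v) = (∑ u, R.edgeMult e v u) ∧
        (∑ u, R.edgeMult e v u) ≤ 2 := by
  rw [edgeMult, dif_pos he]
  exact (R.eEul e he).2.choose_spec

theorem edgeMult_pos_iff {e : Sym2 W} {u v : V} :
    0 < R.edgeMult e u v ↔ e ∈ G.edgeSet ∧ R.eA e u v := by
  by_cases he : e ∈ G.edgeSet
  · refine ⟨fun h => ⟨he, by_contra fun hA => ?_⟩, fun h => (R.edgeMult_spec he).1 u v h.2⟩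
    exact h.ne' ((R.edgeMult_spec he).2.1 u v hA)
  · simp [edgeMult, he]

theorem mem_of_edgeMult_pos {e : Sym2 W} {u v : V} (h : 0 < R.edgeMult e u v) :
    e ∈ G.edgeSet ∧ u ∈ R.eS e ∧ v ∈ R.eS e :=
  have ⟨he, hA⟩ := R.edgeMult_pos_iff.1 h
  ⟨he, (R.eSub e he u v hA).2⟩

theorem sum_edgeMult_in_eq_out (e : Sym2 W) (v : V) :
    ∑ u, R.edgeMult e u v = ∑ u, R.edgeMult e v u := by
  by_cases h : e ∈ G.edgeSet ∧ v ∈ R.eS e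
  · exact ((R.edgeMult_spec h.1).2.2 v h.2).1
  · rw [Finset.sum_eq_zero fun u _ => Nat.eq_zero_of_not_pos fun hp =>
        h ⟨(R.mem_of_edgeMult_pos hp).1, (R.mem_of_edgeMult_pos hp).2.2⟩,
      Finset.sum_eq_zero fun u _ => Nat.eq_zero_of_not_pos fun hp =>
        h ⟨(R.mem_of_edgeMult_pos hp).1, (R.mem_of_edgeMult_pos hp).2.1⟩]

theorem sum_edgeMult_out_le (e : Sym2 W) (v : V) : ∑ u, R.edgeMult e v u ≤ 2 := by
  by_cases h : e ∈ G.edgeSet ∧ v ∈ R.eS e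
  · exact ((R.edgeMult_spec h.1).2.2 v h.2).2
  · rw [Finset.sum_eq_zero fun u _ => Nat.eq_zero_of_not_pos fun hp =>
        h ⟨(R.mem_of_edgeMult_pos hp).1, (R.mem_of_edgeMult_pos hp).2.1⟩]
    exact zero_le_two

variable [DecidableEq V]

noncomputable def branchMult (w : W) (u v : V) : ℕ :=
  ∑ d, (R.branchPath P w d).consecutivePairs.count (u, v)

theorem sum_branchMult_in (w : W) (v : V) :
    ∑ u, R.branchMult P w u v = ∑ d, (R.branchPath P w d).tail.count v := by
  simp only [branchMult]
  rw [Finset.sum_comm]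
  simp only [List.sum_count_pair_right, List.map_snd_consecutivePairs]

theorem sum_branchMult_out (w : W) (v : V) :
    ∑ u, R.branchMult P w v u = ∑ d, (R.branchPath P w d).dropLast.count v := by
  simp only [branchMult]
  rw [Finset.sum_comm]
  simp only [List.sum_count_pair_left, List.map_fst_consecutivePairs]

theorem sum_branchMult_in_eq_out (w : W) (v : V) :
    ∑ u, R.branchMult P w u v = ∑ u, R.branchMult P w v u := by
  rw [sum_branchMult_in, sum_branchMult_out]
  refine sum_count_tail_eq_sum_count_dropLast _ (Equiv.addRight 1) (fun d => ?_) v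
  rw [(R.branchPath_spec P w d).2.2, (R.branchPath_spec P w _).2.1, Equiv.coe_addRight]

theorem sum_branchMult_out_le (w : W) (v : V) : ∑ u, R.branchMult P w v u ≤ 3 := by
  rw [sum_branchMult_out]
  calc ∑ d, (R.branchPath P w d).dropLast.count v ≤ ∑ _d : Fin 3, 1 :=
        Finset.sum_le_sum fun d _ => ((R.branchPath P w d).dropLast_sublist.count_le v).trans
          (List.nodup_iff_count_le_one.1 (R.branchPath_spec P w d).1.1.2.1 v)
    _ = 3 := rfl

theorem sum_branchMult_out_eq_zero {w : W} {v : V} (hv : v ∉ R.vS w) :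
    ∑ u, R.branchMult P w v u = 0 := by
  rw [sum_branchMult_out]
  exact Finset.sum_eq_zero fun d _ => List.count_eq_zero.2 fun hd =>
    hv ((R.branchPath_spec P w d).1.2 v ((R.branchPath P w d).dropLast_subset hd))

variable [Fintype W]

noncomputable def realizationMult (u v : V) : ℕ :=
  ∑ w, R.branchMult P w u v + ∑ e, R.edgeMult e u v

def realizationAdj (u v : V) : Prop := 0 < R.realizationMult P u v

def realizationSet : Set V := (⋃ w, R.branchSet P w) ∪ ⋃ e ∈ G.edgeSet, R.eS e

theorem sum_realizationMult_in_eq_out (v : V) :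
    ∑ u, R.realizationMult P u v = ∑ u, R.realizationMult P v u := by
  simp only [realizationMult, Finset.sum_add_distrib]
  rw [Finset.sum_comm, Finset.sum_comm (f := fun u e => R.edgeMult e u v),
    Finset.sum_comm (f := fun u w => R.branchMult P w v u),
    Finset.sum_comm (f := fun u e => R.edgeMult e v u)]
  simp only [R.sum_branchMult_in_eq_out, R.sum_edgeMult_in_eq_out]

theorem sum_realizationMult_out_le (v : V) : ∑ u, R.realizationMult P v u ≤ 5 := by
  simp only [realizationMult, Finset.sum_add_distrib]
  rw [Finset.sum_comm, Finset.sum_comm (f := fun u e => R.edgeMult e v u)]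
  have hbranch : ∑ w, ∑ u, R.branchMult P w v u ≤ 3 := by
    refine Finset.sum_le_of_ne_zero_imp_eq (fun w w' hw hw' => R.eq_of_mem_vS (v := v) ?_ ?_)
      (R.sum_branchMult_out_le P · v)
    · exact by_contra fun h => hw (R.sum_branchMult_out_eq_zero P h)
    · exact by_contra fun h => hw' (R.sum_branchMult_out_eq_zero P h)
  have hedge : ∑ e, ∑ u, R.edgeMult e v u ≤ 2 := by
    refine Finset.sum_le_of_ne_zero_imp_eq (fun e e' he he' => ?_) (R.sum_edgeMult_out_le · v)
    obtain ⟨u, -, hu⟩ := Finset.exists_ne_zero_of_sum_ne_zero he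
    obtain ⟨u', -, hu'⟩ := Finset.exists_ne_zero_of_sum_ne_zero he'
    obtain ⟨hE, hv, -⟩ := R.mem_of_edgeMult_pos (Nat.pos_of_ne_zero hu)
    obtain ⟨hE', hv', -⟩ := R.mem_of_edgeMult_pos (Nat.pos_of_ne_zero hu')
    exact R.eq_of_mem_eS hE hE' hv hv'
  omega

theorem realizationAdj_of_mem_consecutivePairs {w : W} {d : Fin 3} {u v : V}
    (h : (u, v) ∈ (R.branchPath P w d).consecutivePairs) : R.realizationAdj P u v :=
  Nat.add_pos_left (Finset.sum_pos_iff.2 ⟨w, Finset.mem_univ _,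
    Finset.sum_pos_iff.2 ⟨d, Finset.mem_univ _, List.count_pos_iff.2 h⟩⟩) _

theorem realizationAdj_of_eA {e : Sym2 W} (he : e ∈ G.edgeSet) {u v : V} (h : R.eA e u v) :
    R.realizationAdj P u v :=
  Nat.add_pos_right _ (Finset.sum_pos_iff.2 ⟨e, Finset.mem_univ _, R.edgeMult_pos_iff.2 ⟨he, h⟩⟩)

theorem isSubdigraph_realizationAdj :
    IsSubdigraph A (R.realizationSet P) (R.realizationAdj P) := by
  intro u v huv
  rcases Nat.add_pos_iff_pos_or_pos.1 huv with hb | he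
  · obtain ⟨w, -, hw⟩ := Finset.sum_pos_iff.1 hb
    obtain ⟨d, -, hd⟩ := Finset.sum_pos_iff.1 hw
    have hmem := List.count_pos_iff.1 hd
    have hadj := List.isChain_iff_forall_mem_consecutivePairs.1
      (R.branchPath_spec P w d).1.1.2.2 u v hmem
    obtain ⟨hu, hv⟩ := List.mem_of_mem_consecutivePairs hmem
    exact ⟨(R.vSub w u v hadj).1, Or.inl (Set.mem_iUnion.2 ⟨w, d, hu⟩),
      Or.inl (Set.mem_iUnion.2 ⟨w, d, hv⟩)⟩
  · obtain ⟨e, -, he⟩ := Finset.sum_pos_iff.1 he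
    obtain ⟨hE, hA⟩ := R.edgeMult_pos_iff.1 he
    obtain ⟨hA, hu, hv⟩ := R.eSub e hE u v hA
    exact ⟨hA, Or.inr (Set.mem_biUnion hE hu), Or.inr (Set.mem_biUnion hE hv)⟩

theorem strongOn_eS {e : Sym2 W} (he : e ∈ G.edgeSet) : StrongOn (R.realizationAdj P) (R.eS e) :=
  (R.eEul e he).1.mono_adj fun _ _ => R.realizationAdj_of_eA P he

theorem dipathIn_branchPath (w : W) (d : Fin 3) :
    DipathIn (R.realizationAdj P) (R.branchSet P w) (R.branchPath P w d) :=
  ⟨⟨(R.branchPath_spec P w d).1.1.1, (R.branchPath_spec P w d).1.1.2.1,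
    List.isChain_iff_forall_mem_consecutivePairs.2 fun _ _ =>
      R.realizationAdj_of_mem_consecutivePairs P⟩, fun _ hv => ⟨d, hv⟩⟩

theorem reachIn_terminal_of_mem_branchPath {w : W} {d : Fin 3} {v : V}
    (hv : v ∈ R.branchPath P w d) :
    ReachIn (R.realizationAdj P) (R.branchSet P w) (R.terminal P w d) v ∧
      ReachIn (R.realizationAdj P) (R.branchSet P w) v (R.terminal P w (d + 1)) :=
  (R.dipathIn_branchPath P w d).reachIn_of_mem (R.branchPath_spec P w d).2.1
    (R.branchPath_spec P w d).2.2 hv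

theorem strongOn_branchSet (w : W) : StrongOn (R.realizationAdj P) (R.branchSet P w) := by
  have step d : ReachIn (R.realizationAdj P) (R.branchSet P w)
      (R.terminal P w d) (R.terminal P w (d + 1)) :=
    (R.reachIn_terminal_of_mem_branchPath P
      (List.mem_of_mem_getLast? (R.branchPath_spec P w d).2.2)).1
  have hub d :
      ReachIn (R.realizationAdj P) (R.branchSet P w) (R.terminal P w d) (R.terminal P w 0) ∧
      ReachIn (R.realizationAdj P) (R.branchSet P w) (R.terminal P w 0) (R.terminal P w d) := by
    fin_cases d
    · exact ⟨.refl, .refl⟩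
    · exact ⟨(step 1).trans (step 2), step 0⟩
    · exact ⟨step 2, (step 0).trans (step 1)⟩
  refine strongOn_of_reachIn_hub (R.terminal P w 0) fun v ⟨d, hv⟩ => ?_
  have hv := R.reachIn_terminal_of_mem_branchPath P hv
  exact ⟨hv.2.trans (hub _).1, (hub d).2.trans hv.1⟩

theorem eulerianizable_realization
    (hS : StrongOn (R.realizationAdj P) (R.realizationSet P)) :
    Eulerianizable (R.realizationAdj P) (R.realizationSet P) 5 :=
  ⟨hS, R.realizationMult P, fun _ _ h => h, fun _ _ h => Nat.eq_zero_of_not_pos h,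
    fun v _ => ⟨R.sum_realizationMult_in_eq_out P v, R.sum_realizationMult_out_le P v⟩⟩

end DigraphRep

section

-- More than `2h` rows, so that `h` vertices of `D` (each on at most two rows) miss one; at least
-- two, so that no row edge is a loop.
def gridSize (h : ℕ) : ℕ := 2 * h + 2

instance (h : ℕ) : Fact (1 < gridSize h) := ⟨by simp [gridSize]⟩

abbrev GridVertex (h : ℕ) := ZMod (gridSize h) × ZMod (gridSize h) × Bool

inductive GridEdgeKind
  | row | col | rung

abbrev GridEdge (h : ℕ) := GridEdgeKind × ZMod (gridSize h) × ZMod (gridSize h)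

variable {h : ℕ}

-- `(i, j, false)` is the `j`-th vertex of row `i`, `(i, j, true)` the `i`-th vertex of column `j`.
def gridEdge : GridEdge h → Sym2 (GridVertex h)
  | (.row, i, j) => s((i, j, false), (i, j + 1, false))
  | (.col, i, j) => s((i, j, true), (i + 1, j, true))
  | (.rung, i, j) => s((i, j, false), (i, j, true))

theorem not_isDiag_gridEdge (t : GridEdge h) : ¬ (gridEdge t).IsDiag := by
  obtain ⟨_ | _ | _, i, j⟩ := t <;> simp [gridEdge, Prod.ext_iff]

def gridGraph (h : ℕ) : SimpleGraph (GridVertex h) := .fromEdgeSet (Set.range gridEdge)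

theorem gridEdge_mem_edgeSet (t : GridEdge h) : gridEdge t ∈ (gridGraph h).edgeSet := by
  rw [gridGraph, SimpleGraph.edgeSet_fromEdgeSet]
  exact ⟨⟨t, rfl⟩, not_isDiag_gridEdge t⟩

theorem exists_gridEdge_eq_of_mem_edgeSet {e : Sym2 (GridVertex h)}
    (he : e ∈ (gridGraph h).edgeSet) : ∃ t, gridEdge t = e :=
  (SimpleGraph.edgeSet_fromEdgeSet _ ▸ he).1

def gridPort : GridVertex h → Fin 3 → GridEdge h
  | (i, j, false) => ![(.row, i, j), (.row, i, j - 1), (.rung, i, j)]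
  | (i, j, true) => ![(.col, i, j), (.col, i - 1, j), (.rung, i, j)]

def gridPorts (h : ℕ) : (gridGraph h).PortTriple where
  port p d := gridEdge (gridPort p d)
  port_mem_edgeSet _ _ := gridEdge_mem_edgeSet _
  mem_port := by
    rintro ⟨i, j, _ | _⟩ d <;> fin_cases d <;> simp [gridPort, gridEdge]

end

namespace DigraphRep

variable {h : ℕ} {V : Type*} [Fintype V] {A : V → V → Prop}
  (R : DigraphRep V A (gridGraph h))

def gridBlock (i j : ZMod (gridSize h)) : Set V :=
  R.branchSet (gridPorts h) (i, j, false) ∪ R.eS (gridEdge (.row, i, j)) ∪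
    R.eS (gridEdge (.rung, i, j))

def gridRow (i : ZMod (gridSize h)) : Set V := ⋃ j, R.gridBlock i j

def gridCol (j : ZMod (gridSize h)) : Set V :=
  ⋃ i, (R.branchSet (gridPorts h) (i, j, true) ∪ R.eS (gridEdge (.col, i, j)))

theorem gridRow_inter_gridCol_nonempty (i j : ZMod (gridSize h)) :
    (R.gridRow i ∩ R.gridCol j).Nonempty :=
  ⟨R.terminal (gridPorts h) (i, j, true) 2,
    Set.mem_iUnion.2 ⟨j, Or.inr (R.terminal_mem (gridPorts h) (i, j, true) 2).1⟩,
    Set.mem_iUnion.2 ⟨i, Or.inl (R.terminal_mem_branchSet _ _ 2)⟩⟩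

theorem mem_vS_or_mem_eS_of_mem_gridRow (i : ZMod (gridSize h)) (v : V) (hv : v ∈ R.gridRow i) :
    (∃ w : GridVertex h, w.1 = i ∧ v ∈ R.vS w) ∨
      ∃ e ∈ (gridGraph h).edgeSet, (∀ w ∈ e, w.1 = i) ∧ v ∈ R.eS e := by
  obtain ⟨_, (hv | hv) | hv⟩ := Set.mem_iUnion.1 hv
  · exact Or.inl ⟨_, rfl, R.branchSet_subset_vS _ _ hv⟩
  · exact Or.inr ⟨_, gridEdge_mem_edgeSet _, by simp [gridEdge], hv⟩
  · exact Or.inr ⟨_, gridEdge_mem_edgeSet _, by simp [gridEdge], hv⟩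

theorem mem_vS_or_mem_eS_of_mem_gridCol (j : ZMod (gridSize h)) (v : V) (hv : v ∈ R.gridCol j) :
    (∃ w : GridVertex h, w.2.1 = j ∧ v ∈ R.vS w) ∨
      ∃ e ∈ (gridGraph h).edgeSet, (∀ w ∈ e, w.2.1 = j) ∧ v ∈ R.eS e := by
  obtain ⟨_, hv | hv⟩ := Set.mem_iUnion.1 hv
  · exact Or.inl ⟨_, rfl, R.branchSet_subset_vS _ _ hv⟩
  · exact Or.inr ⟨_, gridEdge_mem_edgeSet _, by simp [gridEdge], hv⟩

theorem exists_disjoint_gridRow {Z : Finset V} (hZ : Z.card ≤ h) :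
    ∃ i, Disjoint (R.gridRow i) Z :=
  exists_disjoint_of_two_mul_card_lt _ Z (R.exists_two_of_mem Prod.fst _ R.mem_vS_or_mem_eS_of_mem_gridRow)
    (by rw [ZMod.card, gridSize]; omega)

theorem exists_disjoint_gridCol {Z : Finset V} (hZ : Z.card ≤ h) :
    ∃ j, Disjoint (R.gridCol j) Z :=
  exists_disjoint_of_two_mul_card_lt _ Z
    (R.exists_two_of_mem (fun w => w.2.1) _ R.mem_vS_or_mem_eS_of_mem_gridCol) (by rw [ZMod.card, gridSize]; omega)

def freeGridLines (Z : Finset V) : Set V :=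
  (⋃ i : {i // Disjoint (R.gridRow i) Z}, R.gridRow i) ∪
    ⋃ j : {j // Disjoint (R.gridCol j) Z}, R.gridCol j

theorem gridRow_subset_freeGridLines {Z : Finset V} {i : ZMod (gridSize h)}
    (hi : Disjoint (R.gridRow i) Z) : R.gridRow i ⊆ R.freeGridLines Z :=
  fun _ hv => Or.inl (Set.mem_iUnion.2 ⟨⟨i, hi⟩, hv⟩)

theorem gridCol_subset_freeGridLines {Z : Finset V} {j : ZMod (gridSize h)}
    (hj : Disjoint (R.gridCol j) Z) : R.gridCol j ⊆ R.freeGridLines Z :=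
  fun _ hv => Or.inr (Set.mem_iUnion.2 ⟨⟨j, hj⟩, hv⟩)

theorem freeGridLines_anti {Z Z' : Finset V} (hZ : Z' ⊆ Z) :
    R.freeGridLines Z ⊆ R.freeGridLines Z' := by
  rintro v (hv | hv)
  · obtain ⟨⟨i, hi⟩, hv⟩ := Set.mem_iUnion.1 hv
    exact R.gridRow_subset_freeGridLines (hi.mono_right (Finset.coe_subset.2 hZ)) hv
  · obtain ⟨⟨j, hj⟩, hv⟩ := Set.mem_iUnion.1 hv
    exact R.gridCol_subset_freeGridLines (hj.mono_right (Finset.coe_subset.2 hZ)) hv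

theorem disjoint_freeGridLines (Z : Finset V) : Disjoint (R.freeGridLines Z) Z :=
  Disjoint.union_left (Set.disjoint_iUnion_left.2 fun i => i.2)
    (Set.disjoint_iUnion_left.2 fun j => j.2)

theorem gridRow_subset_realizationSet (i : ZMod (gridSize h)) :
    R.gridRow i ⊆ R.realizationSet (gridPorts h) :=
  Set.iUnion_subset fun _ => Set.union_subset
    (Set.union_subset (Set.subset_union_of_subset_left (Set.subset_iUnion _ _) _)
      (Set.subset_union_of_subset_right (Set.subset_biUnion_of_mem (gridEdge_mem_edgeSet _)) _))
    (Set.subset_union_of_subset_right (Set.subset_biUnion_of_mem (gridEdge_mem_edgeSet _)) _)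

theorem gridCol_subset_realizationSet (j : ZMod (gridSize h)) :
    R.gridCol j ⊆ R.realizationSet (gridPorts h) :=
  Set.iUnion_subset fun _ => Set.union_subset
    (Set.subset_union_of_subset_left (Set.subset_iUnion _ _) _)
    (Set.subset_union_of_subset_right (Set.subset_biUnion_of_mem (gridEdge_mem_edgeSet _)) _)

theorem freeGridLines_empty : R.freeGridLines ∅ = R.realizationSet (gridPorts h) := by
  refine Set.Subset.antisymm (Set.union_subset (Set.iUnion_subset fun i =>
    R.gridRow_subset_realizationSet i) (Set.iUnion_subset fun j =>
    R.gridCol_subset_realizationSet j)) ?_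
  have hrow i : R.gridRow i ⊆ R.freeGridLines ∅ := R.gridRow_subset_freeGridLines (by simp)
  have hcol j : R.gridCol j ⊆ R.freeGridLines ∅ := R.gridCol_subset_freeGridLines (by simp)
  rintro v (hv | hv)
  · obtain ⟨⟨i, j, _ | _⟩, hv⟩ := Set.mem_iUnion.1 hv
    · exact hrow i (Set.mem_iUnion.2 ⟨j, Or.inl (Or.inl hv)⟩)
    · exact hcol j (Set.mem_iUnion.2 ⟨i, Or.inl hv⟩)
  · obtain ⟨e, he, hv⟩ := Set.mem_iUnion₂.1 hv
    obtain ⟨⟨_ | _ | _, i, j⟩, rfl⟩ := exists_gridEdge_eq_of_mem_edgeSet he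
    · exact hrow i (Set.mem_iUnion.2 ⟨j, Or.inl (Or.inr hv)⟩)
    · exact hcol j (Set.mem_iUnion.2 ⟨i, Or.inr hv⟩)
    · exact hrow i (Set.mem_iUnion.2 ⟨j, Or.inr hv⟩)

variable [DecidableEq V]

theorem strongOn_gridRow (i : ZMod (gridSize h)) :
    StrongOn (R.realizationAdj (gridPorts h)) (R.gridRow i) := by
  refine strongOn_iUnion_of_cycle _ (fun j => ?_) fun j => ?_
  · refine ((R.strongOn_branchSet _ _).union (R.strongOn_eS _ (gridEdge_mem_edgeSet _)) ?_).union
      (R.strongOn_eS _ (gridEdge_mem_edgeSet _)) ?_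
    · exact ⟨_, R.terminal_mem_branchSet _ _ 0, (R.terminal_mem (gridPorts h) (i, j, false) 0).1⟩
    · exact ⟨_, Or.inl (R.terminal_mem_branchSet _ _ 2),
        (R.terminal_mem (gridPorts h) (i, j, false) 2).1⟩
  · have hmem := (R.terminal_mem (gridPorts h) (i, j + 1, false) 1).1
    simp only [gridPorts, gridPort, add_sub_cancel_right] at hmem
    exact ⟨_, Or.inl (Or.inr hmem), Or.inl (Or.inl (R.terminal_mem_branchSet _ _ 1))⟩

theorem strongOn_gridCol (j : ZMod (gridSize h)) :
    StrongOn (R.realizationAdj (gridPorts h)) (R.gridCol j) := by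
  refine strongOn_iUnion_of_cycle _ (fun i => ?_) fun i => ?_
  · exact (R.strongOn_branchSet _ _).union (R.strongOn_eS _ (gridEdge_mem_edgeSet _))
      ⟨_, R.terminal_mem_branchSet _ _ 0, (R.terminal_mem (gridPorts h) (i, j, true) 0).1⟩
  · have hmem := (R.terminal_mem (gridPorts h) (i + 1, j, true) 1).1
    simp only [gridPorts, gridPort, add_sub_cancel_right] at hmem
    exact ⟨_, Or.inr hmem, Or.inl (R.terminal_mem_branchSet _ _ 1)⟩

theorem strongOn_freeGridLines {Z : Finset V} (hZ : Z.card ≤ h) :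
    StrongOn (R.realizationAdj (gridPorts h)) (R.freeGridLines Z) :=
  have := nonempty_subtype.2 (R.exists_disjoint_gridRow hZ)
  have := nonempty_subtype.2 (R.exists_disjoint_gridCol hZ)
  strongOn_union_iUnion_of_meets _ _ (fun i => R.strongOn_gridRow i) (fun j => R.strongOn_gridCol j)
    fun i j => R.gridRow_inter_gridCol_nonempty i j

theorem hasHavenOn_realization_gridPorts :
    HasHavenOn (R.realizationAdj (gridPorts h)) (R.realizationSet (gridPorts h)) (h + 1) := by
  refine hasHavenOn_of_antitone (h + 1) R.freeGridLines (fun Z _ => ?_) (fun Z hZ => ?_)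
    (fun Z hZ => R.strongOn_freeGridLines (Nat.lt_succ_iff.1 hZ))
    (fun Z Z' hZ _ => R.freeGridLines_anti hZ)
  · exact Set.subset_sdiff.2 ⟨R.freeGridLines_empty ▸ R.freeGridLines_anti (Finset.empty_subset Z),
      R.disjoint_freeGridLines Z⟩
  · obtain ⟨i, hi⟩ := R.exists_disjoint_gridRow (Nat.lt_succ_iff.1 hZ)
    obtain ⟨v, hv, -⟩ := R.gridRow_inter_gridCol_nonempty i 0
    exact ⟨v, R.gridRow_subset_freeGridLines hi hv⟩

end DigraphRep

theorem clique_rep_gives_eulerianizable_haven_general (h : ℕ) :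
    ∃ k : ℕ, 0 < k ∧
      ∀ (V : Type) [Fintype V] [DecidableEq V] (A : V → V → Prop),
        Nonempty (DigraphRep V A (⊤ : SimpleGraph (Fin k))) →
        ∃ (S : Set V) (A' : V → V → Prop),
          IsSubdigraph A S A' ∧ Eulerianizable A' S 5 ∧
          ∃ w, h + 1 ≤ w ∧ HasHavenOn A' S w := by
  refine ⟨Fintype.card (GridVertex h), Fintype.card_pos, fun V _ _ A ⟨R₀⟩ => ?_⟩
  let R := R₀.comap <| (SimpleGraph.Embedding.completeGraph
    (Fintype.equivFin (GridVertex h)).toEmbedding).toCopy.comp (.ofLE (gridGraph h) ⊤ le_top)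
  have hstrong := R.freeGridLines_empty ▸ R.strongOn_freeGridLines (Z := ∅) (Nat.zero_le h)
  exact ⟨_, _, R.isSubdigraph_realizationAdj _, R.eulerianizable_realization _ hstrong,
    h + 1, le_rfl, R.hasHavenOn_realization_gridPorts⟩

/-- For every `h ≥ 1` there is `k` such that every finite digraph having a
representation of the complete graph `K_k` has a `5`-eulerianizable subdigraph with a haven
of order at least `h + 1`. -/
theorem clique_rep_gives_eulerianizable_haven (h : ℕ) (hh : 0 < h) :
    ∃ k : ℕ, 0 < k ∧
      ∀ (V : Type) [Fintype V] [DecidableEq V] (A : V → V → Prop),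
        Nonempty (DigraphRep V A (⊤ : SimpleGraph (Fin k))) →
        ∃ (S : Set V) (A' : V → V → Prop),
          IsSubdigraph A S A' ∧ Eulerianizable A' S 5 ∧
          ∃ w, h + 1 ≤ w ∧ HasHavenOn A' S w :=
  clique_rep_gives_eulerianizable_haven_general h
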